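/- arXiv:1608.05757 — 3 statements merged into one kernel-verified Lean document; each statement's English description precedes it below -/
import Mathlib

section
/- Let f be an ergodic invertible measure-preserving transformation of a probability space (X,μ) and 𝔸 a bounded measurable Banach cocycle over f with upper Lyapunov exponent λ and lower Lyapunov exponent χ. Fix ε > 0. Then for every x ∈ Λ the ε-Lyapunov norms are defined at x, fx and f^{-1}x, and the operator norms with respect to these norms satisfy ‖𝔸_x‖_{fx←x,ε} ≤ e^{λ+ε} and ‖(𝔸_x)^{-1}‖_{f^{-1}x←x,ε} ≤ e^{−χ+ε}. -/
open MeasureTheory Filter Topology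

noncomputable section

/-- The `n`-step cocycle over `f` generated by `A`:
`coc f A n x = A(f^[n-1] x) ∘ ⋯ ∘ A(x)`, `coc f A 0 x = Id`. -/
def coc {X V : Type*} [NormedAddCommGroup V] [NormedSpace ℝ V]
    (f : X → X) (A : X → (V ≃L[ℝ] V)) : ℕ → X → (V ≃L[ℝ] V)
  | 0, _ => ContinuousLinearEquiv.refl ℝ V
  | n + 1, x => (coc f A n x).trans (A (f^[n] x))

/-- `‖𝔸ⁿ_x‖`. -/
def cocNorm {X V : Type*} [NormedAddCommGroup V] [NormedSpace ℝ V]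
    (f : X → X) (A : X → (V ≃L[ℝ] V)) (n : ℕ) (x : X) : ℝ :=
  ‖(coc f A n x : V →L[ℝ] V)‖

/-- `‖(𝔸ⁿ_x)⁻¹‖`. -/
def cocInvNorm {X V : Type*} [NormedAddCommGroup V] [NormedSpace ℝ V]
    (f : X → X) (A : X → (V ≃L[ℝ] V)) (n : ℕ) (x : X) : ℝ :=
  ‖((coc f A n x).symm : V →L[ℝ] V)‖

/-- The cocycle generated by `A` is bounded. -/
def IsBoundedCocycle {X V : Type*} [NormedAddCommGroup V] [NormedSpace ℝ V]
    (A : X → (V ≃L[ℝ] V)) : Prop :=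
  ∃ C : ℝ, ∀ x : X, ‖(A x : V →L[ℝ] V)‖ ≤ C ∧ ‖((A x).symm : V →L[ℝ] V)‖ ≤ C

/-- The cocycle generated by `A` is `α`-Hölder. -/
def IsHolderCocycle {X V : Type*} [MetricSpace X] [NormedAddCommGroup V] [NormedSpace ℝ V]
    (A : X → (V ≃L[ℝ] V)) (α : ℝ) : Prop :=
  ∃ M r : ℝ, 0 < M ∧ 0 < r ∧ ∀ x y : X, dist x y ≤ r →
    ‖(A x : V →L[ℝ] V) - (A y : V →L[ℝ] V)‖
      + ‖((A x).symm : V →L[ℝ] V) - ((A y).symm : V →L[ℝ] V)‖ ≤ M * dist x y ^ α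

/-- The closing property for a map of a metric space. -/
def ClosingProperty {X : Type*} [MetricSpace X] (f : X → X) : Prop :=
  ∃ D γ δ₀ : ℝ, 0 < D ∧ 0 < γ ∧ 0 < δ₀ ∧
    ∀ (x : X) (k : ℕ), 0 < k → dist x (f^[k] x) < δ₀ →
      ∃ p : X, f^[k] p = p ∧ ∀ i ≤ k,
        dist (f^[i] x) (f^[i] p) ≤
          D * dist x (f^[k] x) * Real.exp (-γ * (min i (k - i) : ℕ))

/-- The set `Λ` of regular points: points where `(1/n)log‖𝔸ⁿ_x‖ → lam`,
`(1/n)log‖𝔸ⁿ_{f^{-n}x}‖ → lam` and `(1/n)log‖𝔸^{-n}_x‖ = (1/n)log‖(𝔸ⁿ_{f^{-n}x})⁻¹‖ → -chi`. -/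
def lyapSet {X V : Type*} [NormedAddCommGroup V] [NormedSpace ℝ V]
    (f : X ≃ X) (A : X → (V ≃L[ℝ] V)) (lam chi : ℝ) : Set X :=
  { x | Tendsto (fun n : ℕ => Real.log (cocNorm (⇑f) A n x) / n) atTop (𝓝 lam) ∧
        Tendsto (fun n : ℕ => Real.log (cocNorm (⇑f) A n ((⇑f.symm)^[n] x)) / n) atTop (𝓝 lam) ∧
        Tendsto (fun n : ℕ => Real.log (cocInvNorm (⇑f) A n ((⇑f.symm)^[n] x)) / n)
          atTop (𝓝 (-chi)) }

/-- The `ε`-Lyapunov norm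
`‖u‖_{x,ε} = Σ_{n≥0} ‖𝔸ⁿ_x u‖ e^{-(lam+ε)n} + Σ_{n≥1} ‖𝔸^{-n}_x u‖ e^{(chi-ε)n}`,
where `𝔸^{-n}_x = (𝔸ⁿ_{f^{-n}x})⁻¹`. -/
def lyapNorm {X V : Type*} [NormedAddCommGroup V] [NormedSpace ℝ V]
    (f : X ≃ X) (A : X → (V ≃L[ℝ] V)) (lam chi ε : ℝ) (x : X) (u : V) : ℝ :=
  (∑' n : ℕ, ‖(coc (⇑f) A n x) u‖ * Real.exp (-(lam + ε) * n)) +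
  (∑' n : ℕ, ‖((coc (⇑f) A (n + 1) ((⇑f.symm)^[n + 1] x)).symm) u‖
      * Real.exp ((chi - ε) * (n + 1)))

/-- Both series defining the `ε`-Lyapunov norm converge at `x` (for every vector). -/
def LyapNormDefined {X V : Type*} [NormedAddCommGroup V] [NormedSpace ℝ V]
    (f : X ≃ X) (A : X → (V ≃L[ℝ] V)) (lam chi ε : ℝ) (x : X) : Prop :=
  ∀ u : V,
    Summable (fun n : ℕ => ‖(coc (⇑f) A n x) u‖ * Real.exp (-(lam + ε) * n)) ∧
    Summable (fun n : ℕ => ‖((coc (⇑f) A (n + 1) ((⇑f.symm)^[n + 1] x)).symm) u‖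
      * Real.exp ((chi - ε) * (n + 1)))

/-- The operator norm of `B` with respect to the `ε`-Lyapunov norms at `x` (source)
and `y` (target): `‖B‖_{y←x} = sup { ‖Bu‖_{y,ε} : ‖u‖_{x,ε} = 1 }`. -/
def lyapOpNorm {X V : Type*} [NormedAddCommGroup V] [NormedSpace ℝ V]
    (f : X ≃ X) (A : X → (V ≃L[ℝ] V)) (lam chi ε : ℝ) (x y : X) (B : V →L[ℝ] V) : ℝ :=
  sSup { t : ℝ | ∃ u : V, lyapNorm f A lam chi ε x u = 1 ∧
    t = lyapNorm f A lam chi ε y (B u) }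


/-!
Write `aₙ = ‖𝔸ⁿ_x u‖ e^{-(λ+ε)n}` and `bₙ = ‖𝔸^{-(n+1)}_x u‖ e^{(χ-ε)(n+1)}` for the two series of
`‖u‖_{x,ε}`. Both converge at a regular point because `‖𝔸ⁿ_x‖` grows like `e^{λn}` and
`‖𝔸^{-n}_x‖` like `e^{-χn}`. The cocycle identity `𝔸ⁿ_{fx} 𝔸_x = 𝔸ⁿ⁺¹_x` shifts both series by one
step when `x` is replaced by `fx` and `u` by `𝔸_x u`: the forward series picks up the factor
`e^{λ+ε}`, the backward one `e^{χ-ε}`, and the term `a₀ = ‖u‖` moves from the forward to the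
backward series. Since `‖T‖ ‖T⁻¹‖ ≥ 1` forces `χ ≤ λ`, every factor is at most `e^{λ+ε}`.
Reading the same identities backwards at `f⁻¹x` gives the bound for the inverse.
-/

open Real

lemma summable_mul_exp_of_tendsto_log_div {d : ℕ → ℝ} (hd : ∀ n, 0 ≤ d n) {L δ : ℝ}
    (hδ : 0 < δ) (h : Tendsto (fun n : ℕ => log (d n) / n) atTop (𝓝 L)) :
    Summable fun n : ℕ => d n * exp (-(L + δ) * n) := by
  have hgeom : Summable fun n : ℕ => exp (-(δ / 2)) ^ n :=
    summable_geometric_of_lt_one (exp_nonneg _) (exp_lt_one_iff.2 (by linarith))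
  refine hgeom.of_norm_bounded_eventually_nat ?_
  filter_upwards [h.eventually_lt_const (show L < L + δ / 2 by linarith),
    eventually_gt_atTop 0] with n hlog hn
  have hd_le : d n ≤ exp ((L + δ / 2) * n) :=
    (le_exp_log _).trans (exp_le_exp.2 ((div_lt_iff₀ (by exact_mod_cast hn)).1 hlog).le)
  calc ‖d n * exp (-(L + δ) * n)‖ = d n * exp (-(L + δ) * n) := by
        rw [Real.norm_of_nonneg (mul_nonneg (hd n) (exp_nonneg _))]
    _ ≤ exp ((L + δ / 2) * n) * exp (-(L + δ) * n) := by gcongr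
    _ = exp (-(δ / 2)) ^ n := by rw [← exp_add, ← exp_nat_mul]; ring_nf

lemma summable_norm_apply_mul {𝕜 E F : Type*} [NontriviallyNormedField 𝕜]
    [NormedAddCommGroup E] [NormedSpace 𝕜 E] [NormedAddCommGroup F] [NormedSpace 𝕜 F]
    {T : ℕ → E →L[𝕜] F} {r : ℕ → ℝ} (hr : ∀ n, 0 ≤ r n)
    (h : Summable fun n => ‖T n‖ * r n) (u : E) :
    Summable fun n => ‖T n u‖ * r n := by
  refine (h.mul_right ‖u‖).of_nonneg_of_le (fun n => mul_nonneg (norm_nonneg _) (hr n))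
    fun n => ?_
  rw [mul_right_comm]
  exact mul_le_mul_of_nonneg_right ((T n).le_opNorm u) (hr n)

lemma ContinuousLinearEquiv.log_norm_add_log_norm_symm_nonneg {𝕜 E F : Type*}
    [NontriviallyNormedField 𝕜] [NormedAddCommGroup E] [NormedSpace 𝕜 E] [NormedAddCommGroup F] [NormedSpace 𝕜 F]
    (e : E ≃L[𝕜] F) :
    0 ≤ log ‖(e : E →L[𝕜] F)‖ + log ‖(e.symm : F →L[𝕜] E)‖ := by
  rcases subsingleton_or_nontrivial E with hE | hE
  · simp [Subsingleton.elim (e : E →L[𝕜] F) 0, Subsingleton.elim (e.symm : F →L[𝕜] E) 0]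
  · rw [← log_mul e.norm_pos.ne' e.norm_symm_pos.ne']
    exact log_nonneg e.one_le_norm_mul_norm_symm

lemma summable_and_tsum_add_tsum_le_of_shift {a b a' b' : ℕ → ℝ} {c c' k : ℝ}
    (ha : Summable a) (hb : Summable b) (ha₀ : 0 ≤ a 0) (hb_nonneg : ∀ n, 0 ≤ b n)
    (hk : k ≤ c) (hc' : c' ≤ c) (ha' : ∀ n, a' n = c * a (n + 1)) (hb'₀ : b' 0 = k * a 0)
    (hb' : ∀ n, b' (n + 1) = c' * b n) :
    Summable a' ∧ Summable b' ∧ ∑' n, a' n + ∑' n, b' n ≤ c * (∑' n, a n + ∑' n, b n) := by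
  have ha'_sum : Summable a' :=
    (((summable_nat_add_iff 1).2 ha).mul_left c).congr fun n => (ha' n).symm
  have hb'_sum : Summable b' :=
    (summable_nat_add_iff 1).1 ((hb.mul_left c').congr fun n => (hb' n).symm)
  refine ⟨ha'_sum, hb'_sum, ?_⟩
  rw [tsum_congr ha', hb'_sum.tsum_eq_zero_add, tsum_congr hb', hb'₀, tsum_mul_left,
    tsum_mul_left, ha.tsum_eq_zero_add]
  have hka : k * a 0 ≤ c * a 0 := mul_le_mul_of_nonneg_right hk ha₀
  have hcb : c' * ∑' n, b n ≤ c * ∑' n, b n :=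
    mul_le_mul_of_nonneg_right hc' (tsum_nonneg hb_nonneg)
  linarith

section

variable {X V : Type*} [NormedAddCommGroup V] [NormedSpace ℝ V]
  (f : X ≃ X) (A : X → (V ≃L[ℝ] V)) {lam chi ε : ℝ}

lemma coc_succ_apply' (n : ℕ) (x : X) (u : V) :
    coc f A (n + 1) x u = coc f A n (f x) (A x u) := by
  induction n with
  | zero => rfl
  | succ n ih =>
    change A (f^[n + 1] x) (coc f A (n + 1) x u) = A (f^[n] (f x)) (coc f A n (f x) (A x u))
    rw [ih, Function.iterate_succ_apply]

lemma coc_symm_succ_apply (n : ℕ) (x : X) (u : V) :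
    (coc f A (n + 1) x).symm u = (coc f A n x).symm ((A (f^[n] x)).symm u) :=
  rfl

def lyapNormFwdTerm (lam ε : ℝ) (x : X) (u : V) (n : ℕ) : ℝ :=
  ‖coc f A n x u‖ * exp (-(lam + ε) * n)

def lyapNormBwdTerm (chi ε : ℝ) (x : X) (u : V) (n : ℕ) : ℝ :=
  ‖(coc f A (n + 1) (f.symm^[n + 1] x)).symm u‖ * exp ((chi - ε) * (n + 1))

lemma lyapNorm_eq_tsum_add_tsum (x : X) (u : V) :
    lyapNorm f A lam chi ε x u =
      ∑' n, lyapNormFwdTerm f A lam ε x u n + ∑' n, lyapNormBwdTerm f A chi ε x u n :=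
  rfl

lemma lyapNormDefined_iff (x : X) :
    LyapNormDefined f A lam chi ε x ↔
      ∀ u, Summable (lyapNormFwdTerm f A lam ε x u) ∧ Summable (lyapNormBwdTerm f A chi ε x u) :=
  Iff.rfl

lemma lyapNormFwdTerm_nonneg (x : X) (u : V) (n : ℕ) : 0 ≤ lyapNormFwdTerm f A lam ε x u n :=
  mul_nonneg (norm_nonneg _) (exp_nonneg _)

lemma lyapNormBwdTerm_nonneg (x : X) (u : V) (n : ℕ) : 0 ≤ lyapNormBwdTerm f A chi ε x u n :=
  mul_nonneg (norm_nonneg _) (exp_nonneg _)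

lemma lyapNormFwdTerm_map (x : X) (u : V) (n : ℕ) :
    lyapNormFwdTerm f A lam ε (f x) (A x u) n =
      exp (lam + ε) * lyapNormFwdTerm f A lam ε x u (n + 1) := by
  rw [lyapNormFwdTerm, lyapNormFwdTerm, coc_succ_apply', mul_left_comm, ← exp_add]
  congr 2
  push_cast
  ring

lemma lyapNormBwdTerm_map_zero (x : X) (u : V) :
    lyapNormBwdTerm f A chi ε (f x) (A x u) 0 =
      exp (chi - ε) * lyapNormFwdTerm f A lam ε x u 0 := by
  simp [lyapNormBwdTerm, lyapNormFwdTerm, coc, mul_comm]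

lemma lyapNormBwdTerm_map_succ (x : X) (u : V) (n : ℕ) :
    lyapNormBwdTerm f A chi ε (f x) (A x u) (n + 1) =
      exp (chi - ε) * lyapNormBwdTerm f A chi ε x u n := by
  have hpre : f.symm^[n + 1 + 1] (f x) = f.symm^[n + 1] x := by
    rw [Function.iterate_succ_apply, f.symm_apply_apply]
  have hpost : f^[n + 1] (f.symm^[n + 1] x) = x :=
    Function.LeftInverse.iterate f.apply_symm_apply (n + 1) x
  have hcoc : (coc f A (n + 1 + 1) (f.symm^[n + 1 + 1] (f x))).symm (A x u) =
      (coc f A (n + 1) (f.symm^[n + 1] x)).symm u := by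
    rw [coc_symm_succ_apply, hpre, hpost, ContinuousLinearEquiv.symm_apply_apply]
  rw [lyapNormBwdTerm, lyapNormBwdTerm, hcoc, mul_left_comm, ← exp_add]
  congr 2
  push_cast
  ring

lemma lyapNormDefined_of_mem_lyapSet (hε : 0 < ε) {x : X} (hx : x ∈ lyapSet f A lam chi) :
    LyapNormDefined f A lam chi ε x := by
  obtain ⟨hfwd, -, hbwd⟩ := hx
  intro u
  refine ⟨summable_norm_apply_mul (T := fun n => (coc f A n x : V →L[ℝ] V)) (fun n => exp_nonneg _)
      (summable_mul_exp_of_tendsto_log_div (fun n => norm_nonneg _) hε hfwd) u,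
    summable_norm_apply_mul
      (T := fun n => ((coc f A (n + 1) (f.symm^[n + 1] x)).symm : V →L[ℝ] V))
      (fun n => exp_nonneg _) ?_ u⟩
  refine ((summable_nat_add_iff 1).2
    (summable_mul_exp_of_tendsto_log_div (fun n => norm_nonneg _) hε hbwd)).congr fun n => ?_
  push_cast
  ring_nf

lemma chi_le_lam_of_mem_lyapSet {x : X} (hx : x ∈ lyapSet f A lam chi) : chi ≤ lam := by
  obtain ⟨-, hfwd, hbwd⟩ := hx
  have := ge_of_tendsto' (hfwd.add hbwd) fun n => by
    rw [← add_div]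
    exact div_nonneg (ContinuousLinearEquiv.log_norm_add_log_norm_symm_nonneg _) n.cast_nonneg
  linarith

variable {f A}

lemma lyapNorm_map_le (hcl : chi - ε ≤ lam + ε) {x : X} (hx : LyapNormDefined f A lam chi ε x)
    (u : V) :
    (Summable (lyapNormFwdTerm f A lam ε (f x) (A x u)) ∧
      Summable (lyapNormBwdTerm f A chi ε (f x) (A x u))) ∧
    lyapNorm f A lam chi ε (f x) (A x u) ≤ exp (lam + ε) * lyapNorm f A lam chi ε x u := by
  obtain ⟨hfwd, hbwd, hle⟩ := summable_and_tsum_add_tsum_le_of_shift (hx u).1 (hx u).2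
    (lyapNormFwdTerm_nonneg f A x u 0) (lyapNormBwdTerm_nonneg f A x u)
    (exp_le_exp.2 hcl) (exp_le_exp.2 hcl) (lyapNormFwdTerm_map f A x u)
    (lyapNormBwdTerm_map_zero f A x u) (lyapNormBwdTerm_map_succ f A x u)
  exact ⟨⟨hfwd, hbwd⟩, hle⟩

lemma lyapNorm_le_lyapNorm_map (hcl : chi - ε ≤ lam + ε) {y : X}
    (hy : LyapNormDefined f A lam chi ε (f y)) (w : V) :
    (Summable (lyapNormFwdTerm f A lam ε y w) ∧ Summable (lyapNormBwdTerm f A chi ε y w)) ∧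
    lyapNorm f A lam chi ε y w ≤ exp (-chi + ε) * lyapNorm f A lam chi ε (f y) (A y w) := by
  have isolate : ∀ {a b t : ℝ}, a = exp t * b → b = exp (-t) * a := fun h => by
    rw [h, ← mul_assoc, ← exp_add, neg_add_cancel, exp_zero, one_mul]
  obtain ⟨hbwd, hfwd, hle⟩ := summable_and_tsum_add_tsum_le_of_shift (hy (A y w)).2
    (hy (A y w)).1 (lyapNormBwdTerm_nonneg f A _ _ 0) (lyapNormFwdTerm_nonneg f A _ _)
    le_rfl (exp_le_exp.2 (by linarith))
    (fun n => isolate (lyapNormBwdTerm_map_succ f A y w n))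
    (isolate (lyapNormBwdTerm_map_zero f A y w)) (fun n => isolate (lyapNormFwdTerm_map f A y w n))
  refine ⟨⟨hfwd, hbwd⟩, ?_⟩
  rw [lyapNorm_eq_tsum_add_tsum, lyapNorm_eq_tsum_add_tsum,
    add_comm (∑' n, lyapNormFwdTerm f A lam ε y w n),
    add_comm (∑' n, lyapNormFwdTerm f A lam ε (f y) (A y w) n), show -chi + ε = -(chi - ε) by ring]
  exact hle

lemma LyapNormDefined.map (hcl : chi - ε ≤ lam + ε) {x : X}
    (hx : LyapNormDefined f A lam chi ε x) : LyapNormDefined f A lam chi ε (f x) :=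
  (lyapNormDefined_iff f A (f x)).2 fun v => by
  simpa only [ContinuousLinearEquiv.apply_symm_apply] using
    (lyapNorm_map_le hcl hx ((A x).symm v)).1

lemma LyapNormDefined.map_symm (hcl : chi - ε ≤ lam + ε) {x : X}
    (hx : LyapNormDefined f A lam chi ε x) : LyapNormDefined f A lam chi ε (f.symm x) :=
  fun w => (lyapNorm_le_lyapNorm_map hcl (by rwa [f.apply_symm_apply]) w).1

lemma lyapOpNorm_le {x y : X} {B : V →L[ℝ] V} {C : ℝ} (hC : 0 ≤ C)
    (h : ∀ u, lyapNorm f A lam chi ε y (B u) ≤ C * lyapNorm f A lam chi ε x u) :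
    lyapOpNorm f A lam chi ε x y B ≤ C :=
  Real.sSup_le (by rintro t ⟨u, hu, rfl⟩; simpa [hu] using h u) hC

end

theorem lyapunov_norm_estimates_general
    {X V : Type*}
    [NormedAddCommGroup V] [NormedSpace ℝ V]
    (f : X ≃ X)
    (A : X → (V ≃L[ℝ] V))
    (lam chi : ℝ)
    (ε : ℝ) (hε : 0 < ε) :
    ∀ x ∈ lyapSet f A lam chi,
      LyapNormDefined f A lam chi ε x ∧
      LyapNormDefined f A lam chi ε (f x) ∧
      LyapNormDefined f A lam chi ε (f.symm x) ∧
      lyapOpNorm f A lam chi ε x (f x) (A x : V →L[ℝ] V) ≤ Real.exp (lam + ε) ∧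
      lyapOpNorm f A lam chi ε x (f.symm x) ((A (f.symm x)).symm : V →L[ℝ] V)
        ≤ Real.exp (-chi + ε) := by
  intro x hx
  have hcl : chi - ε ≤ lam + ε := by linarith [chi_le_lam_of_mem_lyapSet f A hx]
  have hdef := lyapNormDefined_of_mem_lyapSet f A hε hx
  have hdef' : LyapNormDefined f A lam chi ε (f (f.symm x)) := by rwa [f.apply_symm_apply]
  refine ⟨hdef, hdef.map hcl, hdef.map_symm hcl,
    lyapOpNorm_le (exp_nonneg _) fun u => (lyapNorm_map_le hcl hdef u).2,
    lyapOpNorm_le (exp_nonneg _) fun u => ?_⟩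
  simpa using (lyapNorm_le_lyapNorm_map hcl hdef' ((A (f.symm x)).symm u)).2

/-- **Proposition (Lyapunov norm, part (i)).** For a bounded measurable Banach cocycle
over an ergodic invertible measure-preserving transformation, for every `x ∈ Λ` the
`ε`-Lyapunov norms are defined at `x`, `f x` and `f⁻¹ x`, and
`‖𝔸_x‖_{fx←x,ε} ≤ e^{lam+ε}`, `‖(𝔸_x)⁻¹‖_{f⁻¹x←x,ε} ≤ e^{-chi+ε}`. -/
theorem lyapunov_norm_estimates
    {X V : Type*} [MeasurableSpace X]
    [NormedAddCommGroup V] [NormedSpace ℝ V] [CompleteSpace V]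
    (f : X ≃ X) (μ : Measure X) [IsProbabilityMeasure μ]
    (hf : Ergodic (⇑f) μ) (hfsymm : Measurable (⇑f.symm))
    (A : X → (V ≃L[ℝ] V)) (hbdd : IsBoundedCocycle A)
    (lam chi : ℝ)
    (hlam : ∀ᵐ x ∂μ,
      Tendsto (fun n : ℕ => Real.log (cocNorm (⇑f) A n x) / n) atTop (𝓝 lam))
    (hchi : ∀ᵐ x ∂μ,
      Tendsto (fun n : ℕ => Real.log ((cocInvNorm (⇑f) A n x)⁻¹) / n) atTop (𝓝 chi))
    (ε : ℝ) (hε : 0 < ε) :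
    ∀ x ∈ lyapSet f A lam chi,
      LyapNormDefined f A lam chi ε x ∧
      LyapNormDefined f A lam chi ε (f x) ∧
      LyapNormDefined f A lam chi ε (f.symm x) ∧
      lyapOpNorm f A lam chi ε x (f x) (A x : V →L[ℝ] V) ≤ Real.exp (lam + ε) ∧
      lyapOpNorm f A lam chi ε x (f.symm x) ((A (f.symm x)).symm : V →L[ℝ] V)
        ≤ Real.exp (-chi + ε) :=
  lyapunov_norm_estimates_general f A lam chi ε hε
end
end

section
/- Let (X,f,μ) be an ergodic measure-preserving system and let (a_n) be an integrable subadditive cocycle over f whose exponent λ := inf_n (1/n)∫_X a_n dμ is finite. Then there exists a set E ⊆ X with μ(E) = 1 such that for each x ∈ E and each ε > 0 there is an integer L = L(x,ε) and infinitely many n such that a_n(x) − a_{n−i}(f^i x) ≥ (λ − ε)·i for all integers i with L ≤ i ≤ n. -/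
/-!
Replacing `a_n` by `a_n - n c` reduces a slope `c < λ` to slope `0` for a cocycle with
`∫ a_n ≥ n ε`. If almost no point had infinitely many good times at slope `0`, almost every
point would lie in a jump set: from some time `N` on, every `a_n x` is beaten by some
`a_{n-i}(f^i x)`. Jumping where possible and otherwise stepping by one bounds `a_n` by a Birkhoff
sum of `|a_1|` over the visits to the small complement of the jump set, plus `N` boundary terms;
integrating contradicts the linear growth. So good points form a non-null set. Goodness at slope
`c` passes to every `f^k x` at any smaller slope, so the points whose orbit is eventually good
form a non-null invariant set, of full measure by ergodicity, and since `f` preserves `μ` the good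
set itself has full measure.
-/

open MeasureTheory Filter Topology

noncomputable section

/-- `a` is a subadditive cocycle over `f`: `a_{n+k}(x) ≤ a_k(x) + a_n(f^k x)`. -/
def IsSubadditiveCocycle {X : Type*} (f : X → X) (a : ℕ → X → ℝ) : Prop :=
  ∀ (x : X) (k n : ℕ), 0 < k → 0 < n → a (n + k) x ≤ a k x + a n (f^[k] x)

def goodTimeSet {X : Type*} (f : X → X) (a : ℕ → X → ℝ) (c : ℝ) : Set X :=
  {x | ∃ L : ℕ, ∀ N : ℕ, ∃ n : ℕ, N ≤ n ∧
    ∀ i : ℕ, L ≤ i → i ≤ n → c * i ≤ a n x - a (n - i) (f^[i] x)}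

def jumpSet {X : Type*} (f : X → X) (a : ℕ → X → ℝ) (N : ℕ) : Set X :=
  {y | ∀ r, N ≤ r → ∃ i, 1 ≤ i ∧ i ≤ r ∧ a r y < a (r - i) (f^[i] y)}

section Cocycle

variable {X : Type*} {f : X → X} {a : ℕ → X → ℝ}

theorem goodTimeSet_anti (f : X → X) (a : ℕ → X → ℝ) : Antitone (goodTimeSet f a) := by
  rintro c c' hc x ⟨L, hL⟩
  refine ⟨L, fun N => ?_⟩
  obtain ⟨n, hNn, hn⟩ := hL N
  exact ⟨n, hNn, fun i hLi hin =>
    (mul_le_mul_of_nonneg_right hc i.cast_nonneg).trans (hn i hLi hin)⟩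

theorem goodTimeSet_sub_mul (c : ℝ) :
    goodTimeSet f (fun n x => a n x - n * c) 0 = goodTimeSet f a c := by
  ext x
  refine exists_congr fun L => forall_congr' fun N => exists_congr fun n =>
    and_congr_right fun _ => forall_congr' fun i => forall_congr' fun _ =>
      forall_congr' fun hin => ?_
  simp only [Nat.cast_sub hin, zero_mul]
  constructor <;> intro h <;> linarith

theorem jumpSet_mono (f : X → X) (a : ℕ → X → ℝ) : Monotone (jumpSet f a) :=
  fun _ _ hNN' _ hy r hr => hy r (hNN'.trans hr)

theorem compl_goodTimeSet_zero_subset_iUnion_jumpSet :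
    (goodTimeSet f a 0)ᶜ ⊆ ⋃ N, jumpSet f a N := by
  intro x hx
  simp only [goodTimeSet, Set.mem_compl_iff, Set.mem_ofPred_eq, not_exists, not_forall,
    not_and, not_le, zero_mul, sub_neg, exists_prop] at hx
  obtain ⟨N, hN⟩ := hx 1
  exact Set.mem_iUnion.2 ⟨N, hN⟩

theorem IsSubadditiveCocycle.sub_mul (ha : IsSubadditiveCocycle f a) (c : ℝ) :
    IsSubadditiveCocycle f (fun n x => a n x - n * c) := by
  intro x k n hk hn
  push_cast
  linarith [ha x k n hk hn]

theorem IsSubadditiveCocycle.iterate_mem_goodTimeSet (ha : IsSubadditiveCocycle f a)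
    {c c' : ℝ} (hc : c' < c) {k : ℕ} (hk : 0 < k) {x : X} (hx : x ∈ goodTimeSet f a c) :
    f^[k] x ∈ goodTimeSet f a c' := by
  obtain ⟨L, hL⟩ := hx
  -- the defect `a_k x - c k` of the first `k` steps is absorbed by the slack `(c - c') i`
  obtain ⟨M, hM⟩ := exists_nat_ge ((a k x - c * k) / (c - c'))
  refine ⟨L + M + 1, fun N => ?_⟩
  obtain ⟨m, hNm, hm⟩ := hL (N + k)
  refine ⟨m - k, by omega, fun i hi him => ?_⟩
  have hsplit := ha x k (m - k) hk (by omega)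
  have hgood := hm (i + k) (by omega) (by omega)
  rw [Nat.sub_add_cancel (by omega)] at hsplit
  rw [← Function.iterate_add_apply, show m - k - i = m - (i + k) by omega]
  have hdefect : a k x - c * k ≤ (c - c') * i :=
    (div_le_iff₀' (sub_pos.2 hc)).1 (hM.trans (by exact_mod_cast (by omega : M ≤ i)))
  push_cast at hgood
  linarith

theorem IsSubadditiveCocycle.apply_iterate_le_sum_Ico (ha : IsSubadditiveCocycle f a)
    (N₀ : ℕ) (x : X) {n r t : ℕ} (htr : t + r = n) :
    a r (f^[t] x) ≤ ∑ j ∈ Finset.Ico t n,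
      ((jumpSet f a N₀)ᶜ.indicator (fun y => |a 1 y|) (f^[j] x) +
        if n ≤ j + N₀ then |a 1 (f^[j] x)| else 0) + |a 0 (f^[n] x)| := by
  set w : ℕ → ℝ := fun j => (jumpSet f a N₀)ᶜ.indicator (fun y => |a 1 y|) (f^[j] x) +
    if n ≤ j + N₀ then |a 1 (f^[j] x)| else 0
  have hw_nonneg : ∀ j, 0 ≤ w j := fun j =>
    add_nonneg (Set.indicator_nonneg (fun _ _ => abs_nonneg _) _) (by split_ifs <;> simp)
  induction r using Nat.strong_induction_on generalizing t with
  | _ r ih =>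
  rcases r with _ | r
  · subst htr
    simpa using le_abs_self _
  by_cases hjump : f^[t] x ∈ jumpSet f a N₀ ∧ N₀ ≤ r + 1
  · obtain ⟨i, hi, hir, hlt⟩ := hjump.1 _ hjump.2
    rw [← Function.iterate_add_apply, add_comm i t] at hlt
    have hshorter : ∑ j ∈ Finset.Ico (t + i) n, w j ≤ ∑ j ∈ Finset.Ico t n, w j :=
      Finset.sum_le_sum_of_subset_of_nonneg (Finset.Ico_subset_Ico (by omega) le_rfl)
        fun j _ _ => hw_nonneg j
    linarith [ih (r + 1 - i) (by omega) (t := t + i) (by omega)]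
  · -- a time at which no jump is available is paid for by a single step of weight `|a_1|`
    have hw : |a 1 (f^[t] x)| ≤ w t := by
      rcases not_and_or.1 hjump with hB | hN
      · simp only [w, Set.indicator_of_mem (Set.mem_compl hB)]
        split_ifs <;> simp
      · simp only [w, if_pos (by omega : n ≤ t + N₀)]
        exact le_add_of_nonneg_left (Set.indicator_nonneg (fun _ _ => abs_nonneg _) _)
    have hstep : a (r + 1) (f^[t] x) ≤
        |a 1 (f^[t] x)| + (∑ j ∈ Finset.Ico (t + 1) n, w j + |a 0 (f^[n] x)|) := by
      rcases r with _ | r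
      · linarith [le_abs_self (a 1 (f^[t] x)), abs_nonneg (a 0 (f^[n] x)),
          Finset.sum_nonneg fun j (_ : j ∈ Finset.Ico (t + 1) n) => hw_nonneg j]
      · have hsub := ha (f^[t] x) 1 (r + 1) one_pos (by omega)
        rw [← Function.iterate_add_apply, add_comm 1 t] at hsub
        linarith [le_abs_self (a 1 (f^[t] x)), ih (r + 1) (by omega) (t := t + 1) (by omega)]
    rw [Finset.sum_eq_sum_Ico_succ_bot (by omega)]
    linarith

theorem IsSubadditiveCocycle.apply_le_sum (ha : IsSubadditiveCocycle f a) (N₀ : ℕ) (x : X)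
    (n : ℕ) :
    a n x ≤ ∑ j ∈ Finset.range n, (jumpSet f a N₀)ᶜ.indicator (fun y => |a 1 y|) (f^[j] x) +
      ∑ j ∈ Finset.Ico (n - N₀) n, |a 1 (f^[j] x)| + |a 0 (f^[n] x)| := by
  have h := ha.apply_iterate_le_sum_Ico N₀ x (zero_add n)
  rwa [Finset.sum_add_distrib, ← Finset.sum_filter, ← Finset.range_eq_Ico,
    show (Finset.range n).filter (fun j => n ≤ j + N₀) = Finset.Ico (n - N₀) n by
      ext j; simp only [Finset.mem_filter, Finset.mem_range, Finset.mem_Ico]; omega] at h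

end Cocycle

theorem MeasureTheory.MeasurePreserving.integral_comp_of_aestronglyMeasurable
    {α β E : Type*} [MeasurableSpace α] [MeasurableSpace β] [NormedAddCommGroup E]
    [NormedSpace ℝ E] {μ : Measure α} {ν : Measure β} {f : α → β} {g : β → E}
    (hf : MeasurePreserving f μ ν) (hg : AEStronglyMeasurable g ν) :
    ∫ x, g (f x) ∂μ = ∫ y, g y ∂ν := by
  rw [← hf.map_eq] at hg ⊢
  exact (integral_map hf.measurable.aemeasurable hg).symm

theorem Ergodic.measure_eq_one_of_eventually_iterate_mem {X : Type*} [MeasurableSpace X]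
    {μ : Measure X} [IsProbabilityMeasure μ] {f : X → X} (hf : Ergodic f μ) {s t : Set X}
    (ht : NullMeasurableSet t μ) (hs : μ s ≠ 0) (hst : ∀ x ∈ s, ∀ᶠ k in atTop, f^[k] x ∈ t) :
    μ t = 1 := by
  set A := {x | ∀ᶠ k in atTop, f^[k] x ∈ t}
  set C : ℕ → Set X := fun K => {x | ∀ k, K ≤ k → f^[k] x ∈ t}
  have hAC : A = ⋃ K, C K := by
    ext x
    simp only [A, C, Set.mem_ofPred_eq, Set.mem_iUnion, eventually_atTop]
  have hC_mono : Monotone C := fun K K' hKK' x hx k hk => hx k (hKK'.trans hk)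
  have hC_le : ∀ K, μ (C K) ≤ μ t := fun K =>
    calc μ (C K) ≤ μ (f^[K] ⁻¹' t) := measure_mono fun x hx => hx K le_rfl
      _ = μ t := (hf.toMeasurePreserving.iterate K).measure_preimage ht
  have hA_inv : f ⁻¹' A = A := by
    ext x
    simp only [A, Set.mem_preimage, Set.mem_ofPred_eq, ← Function.iterate_succ_apply,
      ← tendsto_principal]
    exact tendsto_add_atTop_iff_nat (f := fun k => f^[k] x) 1
  have hA_meas : NullMeasurableSet A μ := hAC ▸ .iUnion fun K =>
    measurableSet_setOfPred.2 <| .forall fun k => measurable_const.imp <|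
      measurableSet_setOfPred.1 <| ht.preimage (hf.quasiMeasurePreserving.iterate k)
  have hA : μ A = 1 := by
    rcases hf.quasiErgodic.ae_empty_or_univ₀ hA_meas hA_inv.eventuallyEq with hA | hA
    · exact absurd (measure_mono_null (fun x hx => hst x hx) (ae_eq_empty.1 hA)) hs
    · rw [measure_congr hA, measure_univ]
  refine le_antisymm prob_le_one ?_
  calc 1 = ⨆ K, μ (C K) := by rw [← hA, hAC, hC_mono.measure_iUnion]
    _ ≤ μ t := iSup_le hC_le

section Measure

variable {X : Type*} [MeasurableSpace X] {μ : Measure X} {f : X → X} {a : ℕ → X → ℝ}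

theorem nullMeasurable_comp_iterate (hf : MeasurePreserving f μ μ)
    (ha : ∀ n, AEStronglyMeasurable (a n) μ) (n i : ℕ) :
    NullMeasurable (fun x => a n (f^[i] x)) μ :=
  ((ha n).comp_measurePreserving (hf.iterate i)).aemeasurable.nullMeasurable

theorem nullMeasurableSet_goodTimeSet (hf : MeasurePreserving f μ μ)
    (ha : ∀ n, AEStronglyMeasurable (a n) μ) (c : ℝ) :
    NullMeasurableSet (goodTimeSet f a c) μ := by
  refine measurableSet_setOfPred.2 <| .exists fun L => .forall fun N => .exists fun n =>
    measurable_const.and <| .forall fun i => measurable_const.imp <| measurable_const.imp ?_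
  exact measurableSet_setOfPred.1 <| measurableSet_le measurable_const <|
    Measurable.sub (nullMeasurable_comp_iterate hf ha n 0)
      (nullMeasurable_comp_iterate hf ha (n - i) i)

theorem nullMeasurableSet_jumpSet (hf : MeasurePreserving f μ μ)
    (ha : ∀ n, AEStronglyMeasurable (a n) μ) (N : ℕ) :
    NullMeasurableSet (jumpSet f a N) μ := by
  refine measurableSet_setOfPred.2 <| .forall fun r => measurable_const.imp <| .exists fun i =>
    measurable_const.and <| measurable_const.and ?_
  exact measurableSet_setOfPred.1 <| measurableSet_lt (nullMeasurable_comp_iterate hf ha r 0)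
    (nullMeasurable_comp_iterate hf ha (r - i) i)

theorem IsSubadditiveCocycle.integral_le (ha : IsSubadditiveCocycle f a)
    (hf : MeasurePreserving f μ μ) (hint : ∀ n, Integrable (a n) μ) (N₀ n : ℕ) :
    ∫ x, a n x ∂μ ≤ n * ∫ x in (jumpSet f a N₀)ᶜ, |a 1 x| ∂μ +
      N₀ * ∫ x, |a 1 x| ∂μ + ∫ x, |a 0 x| ∂μ := by
  have hcomp : ∀ {h : X → ℝ}, Integrable h μ → ∀ j,
      Integrable (fun x => h (f^[j] x)) μ ∧ ∫ x, h (f^[j] x) ∂μ = ∫ x, h x ∂μ := fun hh j =>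
    ⟨(hf.iterate j).integrable_comp_of_integrable hh,
      (hf.iterate j).integral_comp_of_aestronglyMeasurable hh.1⟩
  have hJ := (nullMeasurableSet_jumpSet hf (fun n => (hint n).1) N₀).compl
  have hind := (hint 1).abs.indicator₀ hJ
  have hsum₁ := integrable_finsetSum (Finset.range n) fun j _ => (hcomp hind j).1
  have hsum₂ := integrable_finsetSum (Finset.Ico (n - N₀) n) fun j _ => (hcomp (hint 1).abs j).1
  have hsum : Integrable (fun x =>
      ∑ j ∈ Finset.range n, (jumpSet f a N₀)ᶜ.indicator (fun y => |a 1 y|) (f^[j] x) +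
        ∑ j ∈ Finset.Ico (n - N₀) n, |a 1 (f^[j] x)|) μ := hsum₁.add hsum₂
  calc ∫ x, a n x ∂μ
      ≤ ∫ x, (∑ j ∈ Finset.range n, (jumpSet f a N₀)ᶜ.indicator (fun y => |a 1 y|) (f^[j] x) +
          ∑ j ∈ Finset.Ico (n - N₀) n, |a 1 (f^[j] x)| + |a 0 (f^[n] x)|) ∂μ :=
        integral_mono (hint n) (hsum.add (hcomp (hint 0).abs n).1)
          fun x => ha.apply_le_sum N₀ x n
    _ = n * ∫ x in (jumpSet f a N₀)ᶜ, |a 1 x| ∂μ + (n - (n - N₀) : ℕ) * ∫ x, |a 1 x| ∂μ +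
          ∫ x, |a 0 x| ∂μ := by
        rw [integral_add hsum (hcomp (hint 0).abs n).1, integral_add hsum₁ hsum₂,
          integral_finsetSum _ fun j _ => (hcomp hind j).1,
          integral_finsetSum _ fun j _ => (hcomp (hint 1).abs j).1]
        simp only [fun j => (hcomp hind j).2, fun j => (hcomp (hint 1).abs j).2,
          (hcomp (hint 0).abs n).2, Finset.sum_const, Finset.card_range, Nat.card_Ico,
          nsmul_eq_mul, integral_indicator₀ hJ]
    _ ≤ n * ∫ x in (jumpSet f a N₀)ᶜ, |a 1 x| ∂μ + N₀ * ∫ x, |a 1 x| ∂μ + ∫ x, |a 0 x| ∂μ := by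
        gcongr
        exact_mod_cast (by omega : n - (n - N₀) ≤ N₀)

theorem IsSubadditiveCocycle.measure_goodTimeSet_zero_ne_zero [IsFiniteMeasure μ]
    (ha : IsSubadditiveCocycle f a) (hf : MeasurePreserving f μ μ)
    (hint : ∀ n, Integrable (a n) μ) {ε : ℝ} (hε : 0 < ε)
    (hgrowth : ∀ n : ℕ, 0 < n → n * ε ≤ ∫ x, a n x ∂μ) :
    μ (goodTimeSet f a 0) ≠ 0 := by
  intro hnull
  have hJc : Tendsto (fun N => μ (jumpSet f a N)ᶜ) atTop (𝓝 0) := by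
    have h := tendsto_measure_iInter_atTop (μ := μ)
      (fun N => (nullMeasurableSet_jumpSet hf (fun n => (hint n).1) N).compl)
      (fun _ _ hNN' => Set.compl_subset_compl.2 (jumpSet_mono f a hNN')) ⟨0, measure_ne_top μ _⟩
    rwa [← Set.compl_iUnion, measure_mono_null
      (Set.compl_subset_comm.1 compl_goodTimeSet_zero_subset_iUnion_jumpSet) hnull] at h
  obtain ⟨N₀, hN₀⟩ : ∃ N₀, ∫ x in (jumpSet f a N₀)ᶜ, |a 1 x| ∂μ < ε / 2 :=
    (((hint 1).abs.tendsto_setIntegral_nhds_zero hJc).eventually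
      (gt_mem_nhds (half_pos hε))).exists
  set C := N₀ * ∫ x, |a 1 x| ∂μ + ∫ x, |a 0 x| ∂μ
  -- `(n + 1) ε ≤ ∫ a_{n+1} ≤ (n + 1) ε / 2 + C` fails once `n ε / 2 > C`
  obtain ⟨n, hn⟩ := exists_nat_gt (C / (ε / 2))
  have hupper := ha.integral_le hf hint N₀ (n + 1)
  have hlower := hgrowth (n + 1) n.succ_pos
  rw [div_lt_iff₀ (half_pos hε)] at hn
  push_cast at hupper hlower
  nlinarith

theorem Ergodic.ae_mem_goodTimeSet [IsProbabilityMeasure μ] (hf : Ergodic f μ)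
    (ha : IsSubadditiveCocycle f a) (hint : ∀ n, Integrable (a n) μ) {lam : ℝ}
    (hlam : ∀ n : ℕ, 0 < n → n * lam ≤ ∫ x, a n x ∂μ) {c : ℝ} (hc : c < lam) :
    ∀ᵐ x ∂μ, x ∈ goodTimeSet f a c := by
  have hmeas := nullMeasurableSet_goodTimeSet hf.toMeasurePreserving (fun n => (hint n).1)
  obtain ⟨c', hcc', hc'lam⟩ := exists_between hc
  have hpos : μ (goodTimeSet f a c') ≠ 0 := by
    rw [← goodTimeSet_sub_mul]
    refine (ha.sub_mul c').measure_goodTimeSet_zero_ne_zero hf.toMeasurePreserving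
      (fun n => (hint n).sub (integrable_const _)) (ε := lam - c') (sub_pos.2 hc'lam)
      fun n hn => ?_
    rw [integral_sub (hint n) (integrable_const _), integral_const, probReal_univ, one_smul]
    linarith [hlam n hn]
  exact (prob_compl_eq_zero_iff₀ (hmeas c)).2 <|
    hf.measure_eq_one_of_eventually_iterate_mem (hmeas c) hpos fun x hx =>
      eventually_atTop.2 ⟨1, fun k hk => ha.iterate_mem_goodTimeSet hcc' hk hx⟩

end Measure

/-- **Proposition (Karlsson–Margulis).** For an integrable subadditive cocycle with
finite exponent `lam = inf_n (1/n)∫ a_n dμ` over an ergodic measure-preserving system,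
there is a full-measure set `E` such that for each `x ∈ E` and `ε > 0` there is `L`
and infinitely many `n` with `a_n(x) - a_{n-i}(f^i x) ≥ (lam - ε)·i` for all
`L ≤ i ≤ n`. -/
theorem karlsson_margulis_good_times
    {X : Type*} [MeasurableSpace X] (μ : Measure X) [IsProbabilityMeasure μ]
    (f : X → X) (hf : Ergodic f μ)
    (a : ℕ → X → ℝ) (hsub : IsSubadditiveCocycle f a)
    (hint : ∀ n : ℕ, Integrable (a n) μ)
    (lam : ℝ)
    (hlam : IsGLB { t : ℝ | ∃ n : ℕ, 0 < n ∧ t = (∫ x, a n x ∂μ) / n } lam) :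
    ∃ E : Set X, μ E = 1 ∧ ∀ x ∈ E, ∀ ε : ℝ, 0 < ε → ∃ L : ℕ,
      ∀ N : ℕ, ∃ n : ℕ, N ≤ n ∧
        ∀ i : ℕ, L ≤ i → i ≤ n → (lam - ε) * i ≤ a n x - a (n - i) (f^[i] x) := by
  have hgrowth : ∀ n : ℕ, 0 < n → n * lam ≤ ∫ x, a n x ∂μ := fun n hn =>
    (le_div_iff₀' (Nat.cast_pos.2 hn)).1 (hlam.1 ⟨n, hn, rfl⟩)
  set E := ⋂ k : ℕ, goodTimeSet f a (lam - 1 / (k + 1))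
  have hE : ∀ᵐ x ∂μ, x ∈ E := by
    simp only [E, Set.mem_iInter, ae_all_iff]
    exact fun k => hf.ae_mem_goodTimeSet hsub hint hgrowth (sub_lt_self _ Nat.one_div_pos_of_nat)
  refine ⟨E, by rw [measure_congr (eventuallyEq_univ (s := E).2 hE), measure_univ],
    fun x hx ε hε => ?_⟩
  obtain ⟨k, hk⟩ := exists_nat_one_div_lt hε
  exact goodTimeSet_anti f a (by linarith) (Set.mem_iInter.1 hx k)
end
end

section
/- Let f : X → X be a homeomorphism of a separable metric space preserving an ergodic Borel probability measure μ. Then there exists a set P ⊆ X with μ(P) = 1 such that for each x ∈ P and all ε, δ > 0 there exists an integer N = N(x,ε,δ) such that for every integer n > N there is an integer k with n(1 + ε) < k < n(1 + 2ε) and dist(x, f^k x) < δ. -/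
/-!
Apply the ergodic theorem to the indicators of a countable basis of the topology: for `μ`-a.e. `x`
the frequency of visits of the orbit of `x` to every basic open set `U` tends to `μ U`, and `x`
lies in the support of `μ`. Given `δ`, take a basic `U ∋ x` inside the `δ`-ball around `x`; then
`μ U > 0`, so the number of visits to `U` before time `m` is `m μ U + o(m)` and therefore grows
between the times `n (1 + ε)` and `n (1 + 2ε)` once `n` is large.

The ergodic theorem is needed only for `[0, 1]`-valued `g`, where the lower bound is a stopping
time argument: the liminf of the Birkhoff averages is invariant, hence a.e. equal to a constant
`ℓ`; cutting orbits at the first time the average drops below `r > ℓ`, and integrating, gives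
`∫ g ≤ r`. The upper bound is the lower bound for `1 - g`.
-/

open MeasureTheory Filter Topology TopologicalSpace
open Set Function

lemma liminf_add_eq_of_tendsto_zero {ι : Type*} {l : Filter ι} [l.NeBot] {u v : ι → ℝ}
    (hu : Tendsto u l (𝓝 0)) (hv₀ : IsBoundedUnder (· ≥ ·) l v)
    (hv₁ : IsBoundedUnder (· ≤ ·) l v) :
    liminf (u + v) l = liminf v l := by
  apply le_antisymm
  · simpa [hu.limsup_eq] using liminf_add_le hu.isBoundedUnder_ge hu.isBoundedUnder_le hv₀
      hv₁.isCoboundedUnder_ge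
  · simpa [hu.liminf_eq] using le_liminf_add hu.isBoundedUnder_ge hu.isBoundedUnder_le hv₀
      hv₁.isCoboundedUnder_ge

lemma tendsto_comp_div_natCast {s : ℕ → ℝ} {c a : ℝ} {m : ℕ → ℕ}
    (hs : Tendsto (fun n => s n / n) atTop (𝓝 c)) (ha : 0 < a)
    (hm : Tendsto (fun n => (m n : ℝ) / n) atTop (𝓝 a)) :
    Tendsto (fun n => s (m n) / n) atTop (𝓝 (c * a)) := by
  have hm_top : Tendsto m atTop atTop := by
    refine tendsto_natCast_atTop_iff.1 ((hm.pos_mul_atTop ha tendsto_natCast_atTop_atTop).congr' ?_)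
    filter_upwards [eventually_ne_atTop 0] with n hn
    field_simp
  refine ((hs.comp hm_top).mul hm).congr' ?_
  filter_upwards [hm_top.eventually_ne_atTop 0] with n hn
  simp only [comp_apply]
  field_simp

lemma tendsto_floor_mul_add_one_div (a : ℝ) (ha : 0 ≤ a) :
    Tendsto (fun n : ℕ => ((⌊a * n⌋₊ + 1 : ℕ) : ℝ) / n) atTop (𝓝 a) := by
  have := ((tendsto_nat_floor_mul_div_atTop ha).comp tendsto_natCast_atTop_atTop).add
    (tendsto_one_div_atTop_nhds_zero_nat (𝕜 := ℝ))
  simpa [add_div] using this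

lemma eventually_lt_floor_mul {s : ℕ → ℝ} {c a b : ℝ}
    (hs : Tendsto (fun n => s n / n) atTop (𝓝 c)) (hc : 0 < c) (ha : 0 < a) (hab : a < b) :
    ∀ᶠ n : ℕ in atTop, s (⌊a * n⌋₊ + 1) < s ⌊b * n⌋₊ := by
  have hlow := tendsto_comp_div_natCast hs ha (tendsto_floor_mul_add_one_div a ha.le)
  have hup := tendsto_comp_div_natCast hs (ha.trans hab)
    ((tendsto_nat_floor_mul_div_atTop (ha.trans hab).le).comp tendsto_natCast_atTop_atTop)
  filter_upwards [hlow.eventually_lt hup (by gcongr), eventually_gt_atTop 0] with n hlt hn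
  exact (div_lt_div_iff_of_pos_right (by positivity)).1 hlt

section BirkhoffSum

variable {α : Type*} {T : α → α} {g : α → ℝ}

lemma birkhoffSum_nonneg (hg : ∀ x, 0 ≤ g x) (n : ℕ) (x : α) : 0 ≤ birkhoffSum T g n x :=
  Finset.sum_nonneg fun _ _ => hg _

lemma birkhoffSum_le_of_le_one (hg : ∀ x, g x ≤ 1) (n : ℕ) (x : α) :
    birkhoffSum T g n x ≤ n := by
  simpa [birkhoffSum] using Finset.sum_le_sum fun k (_ : k ∈ Finset.range n) => hg (T^[k] x)

lemma birkhoffAverage_real_eq_div (n : ℕ) (x : α) :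
    birkhoffAverage ℝ T g n x = birkhoffSum T g n x / n := by
  rw [birkhoffAverage, smul_eq_mul, inv_mul_eq_div]

lemma birkhoffAverage_mem_Icc (hg : ∀ x, g x ∈ Icc 0 1) (n : ℕ) (x : α) :
    birkhoffAverage ℝ T g n x ∈ Icc 0 1 := by
  rw [birkhoffAverage_real_eq_div]
  exact ⟨div_nonneg (birkhoffSum_nonneg (fun x => (hg x).1) n x) n.cast_nonneg,
    div_le_one_of_le₀ (birkhoffSum_le_of_le_one (fun x => (hg x).2) n x) n.cast_nonneg⟩

lemma indicator_one_mem_Icc (C : Set α) (x : α) : C.indicator (1 : α → ℝ) x ∈ Icc 0 1 := by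
  by_cases hx : x ∈ C <;> simp [hx]

lemma exists_iterate_mem_of_birkhoffSum_lt {C : Set α} {m₁ m₂ : ℕ} {x : α}
    (h : birkhoffSum T (C.indicator (1 : α → ℝ)) m₁ x < birkhoffSum T (C.indicator 1) m₂ x) :
    ∃ k, m₁ ≤ k ∧ k < m₂ ∧ T^[k] x ∈ C := by
  by_contra! hC
  refine h.not_ge ?_
  rcases le_total m₂ m₁ with hle | hle
  · obtain ⟨d, rfl⟩ := Nat.exists_eq_add_of_le hle
    rw [birkhoffSum_add]
    linarith [birkhoffSum_nonneg (fun y => (indicator_one_mem_Icc C y).1) (T := T) d (T^[m₂] x)]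
  · simp only [birkhoffSum]
    rw [← Finset.sum_range_add_sum_Ico _ hle, Finset.sum_eq_zero fun k hk =>
      indicator_of_notMem (hC k (Finset.mem_Ico.1 hk).1 (Finset.mem_Ico.1 hk).2) _, add_zero]

/-- Cut the orbit into blocks of length `t ≤ M` on which the sum is below `c t`, starting at
points outside `E`, and single steps at points of `E`. -/
lemma birkhoffSum_le_add_birkhoffSum_indicator (hg : ∀ x, g x ≤ 1) {c : ℝ} (hc : 0 ≤ c)
    {E : Set α} {M : ℕ} (hE : ∀ y ∉ E, ∃ t ∈ Finset.Icc 1 M, birkhoffSum T g t y < c * t)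
    (N : ℕ) (x : α) :
    birkhoffSum T g N x ≤ c * N + birkhoffSum T (E.indicator 1) N x + M := by
  induction N using Nat.strong_induction_on generalizing x with
  | _ N ih =>
  have hE₀ : ∀ n y, 0 ≤ birkhoffSum T (E.indicator (1 : α → ℝ)) n y :=
    birkhoffSum_nonneg fun y => (indicator_one_mem_Icc E y).1
  rcases le_or_gt N M with hNM | hMN
  · have : (N : ℝ) ≤ M := by exact_mod_cast hNM
    nlinarith [birkhoffSum_le_of_le_one hg (T := T) N x, hE₀ N x, (N.cast_nonneg : (0 : ℝ) ≤ N)]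
  by_cases hx : x ∈ E
  · obtain ⟨n, rfl⟩ : ∃ n, N = n + 1 := Nat.exists_eq_add_one.2 (by omega)
    have := ih n n.lt_succ_self (T x)
    rw [birkhoffSum_succ', birkhoffSum_succ', indicator_of_mem hx, Pi.one_apply]
    push_cast
    nlinarith [hg x]
  · obtain ⟨t, ht, hlt⟩ := hE x hx
    obtain ⟨d, rfl⟩ : ∃ d, N = t + d := Nat.exists_eq_add_of_le (by simp at ht; omega)
    have := ih d (by simp at ht; omega) (T^[t] x)
    rw [birkhoffSum_add, birkhoffSum_add]
    push_cast
    nlinarith [hE₀ t x]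

lemma liminf_birkhoffAverage_apply (hg : ∀ x, g x ∈ Icc 0 1) (x : α) :
    liminf (birkhoffAverage ℝ T g · (T x)) atTop = liminf (birkhoffAverage ℝ T g · x) atTop := by
  have hbdd : Bornology.IsBounded (range g) :=
    Metric.isBounded_Icc (0 : ℝ) 1 |>.subset (range_subset_iff.2 hg)
  have := liminf_add_eq_of_tendsto_zero (v := (birkhoffAverage ℝ T g · x))
    (tendsto_birkhoffAverage_apply_sub_birkhoffAverage' ℝ hbdd T x)
    (isBoundedUnder_of_eventually_ge (.of_forall fun n => (birkhoffAverage_mem_Icc hg n x).1))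
    (isBoundedUnder_of_eventually_le (.of_forall fun n => (birkhoffAverage_mem_Icc hg n x).2))
  simpa only [Pi.add_def, sub_add_cancel] using this

lemma eventually_exists_iterate_mem_of_tendsto_birkhoffAverage {C : Set α} {x : α} {c a b : ℝ}
    (h : Tendsto (birkhoffAverage ℝ T (C.indicator 1) · x) atTop (𝓝 c)) (hc : 0 < c)
    (ha : 0 < a) (hab : a < b) :
    ∀ᶠ n : ℕ in atTop, ∃ k : ℕ, (n : ℝ) * a < k ∧ (k : ℝ) < n * b ∧ T^[k] x ∈ C := by
  simp only [birkhoffAverage_real_eq_div] at h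
  filter_upwards [eventually_lt_floor_mul h hc ha hab] with n hn
  obtain ⟨k, hk₁, hk₂, hkC⟩ := exists_iterate_mem_of_birkhoffSum_lt hn
  refine ⟨k, ?_, ?_, hkC⟩
  · calc (n : ℝ) * a < ⌊a * n⌋₊ + 1 := by rw [mul_comm]; exact Nat.lt_floor_add_one _
      _ ≤ k := by exact_mod_cast hk₁
  · calc (k : ℝ) < ⌊b * n⌋₊ := by exact_mod_cast hk₂
      _ ≤ n * b := by
        rw [mul_comm (n : ℝ)]
        exact Nat.floor_le (mul_nonneg (ha.trans hab).le n.cast_nonneg)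

end BirkhoffSum

section Measure

variable {α : Type*} [MeasurableSpace α] {T : α → α} {g : α → ℝ} {μ : Measure α}

lemma measurable_birkhoffSum (hT : Measurable T) (hg : Measurable g) (n : ℕ) :
    Measurable (birkhoffSum T g n) :=
  Finset.measurable_sum _ fun k _ => hg.comp (hT.iterate k)

lemma measurable_birkhoffAverage (hT : Measurable T) (hg : Measurable g) (n : ℕ) :
    Measurable (birkhoffAverage ℝ T g n) := by
  unfold birkhoffAverage
  exact (measurable_birkhoffSum hT hg n).const_smul ((n : ℝ)⁻¹)

lemma MeasureTheory.MeasurePreserving.integral_birkhoffSum (hT : MeasurePreserving T μ μ)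
    (hg : Integrable g μ) (n : ℕ) :
    ∫ x, birkhoffSum T g n x ∂μ = n * ∫ x, g x ∂μ := by
  have hcomp : ∀ k, ∫ x, g (T^[k] x) ∂μ = ∫ x, g x ∂μ := fun k => by
    rw [← integral_map (hT.iterate k).aemeasurable (((hT.iterate k).map_eq).symm ▸ hg.1),
      (hT.iterate k).map_eq]
  simp only [birkhoffSum]
  rw [integral_finsetSum (f := fun k x => g (T^[k] x)) _
    fun k _ => (hT.iterate k).integrable_comp_of_integrable hg]
  simp [hcomp]

lemma MeasureTheory.MeasurePreserving.integrable_birkhoffSum (hT : MeasurePreserving T μ μ)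
    (hg : Integrable g μ) (n : ℕ) : Integrable (birkhoffSum T g n) μ :=
  integrable_finsetSum _ fun k _ => (hT.iterate k).integrable_comp_of_integrable hg

lemma MeasureTheory.MeasurePreserving.integral_le_add_measureReal_of_birkhoffSum_lt
    [IsProbabilityMeasure μ] (hT : MeasurePreserving T μ μ)
    (hgi : Integrable g μ) (hg : ∀ x, g x ≤ 1) {c : ℝ} (hc : 0 ≤ c) {E : Set α}
    (hEm : MeasurableSet E) {M : ℕ}
    (hE : ∀ y ∉ E, ∃ t ∈ Finset.Icc 1 M, birkhoffSum T g t y < c * t) :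
    ∫ x, g x ∂μ ≤ c + μ.real E := by
  have hEi : Integrable (E.indicator (1 : α → ℝ)) μ := (integrable_const 1).indicator hEm
  have hN : ∀ N : ℕ, N * ∫ x, g x ∂μ ≤ c * N + N * μ.real E + M := fun N => by
    rw [← hT.integral_birkhoffSum hgi, ← integral_indicator_one hEm, ← hT.integral_birkhoffSum hEi]
    calc ∫ x, birkhoffSum T g N x ∂μ
        ≤ ∫ x, (c * N + birkhoffSum T (E.indicator 1) N x + M) ∂μ :=
          integral_mono (hT.integrable_birkhoffSum hgi N)
            (((integrable_const _).add (hT.integrable_birkhoffSum hEi N)).add (integrable_const _))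
            (birkhoffSum_le_add_birkhoffSum_indicator hg hc hE N)
      _ = _ := by
          rw [integral_add (f := fun x => c * N + birkhoffSum T (E.indicator 1) N x)
            ((integrable_const _).add (hT.integrable_birkhoffSum hEi N)) (integrable_const _),
            integral_add (integrable_const _) (hT.integrable_birkhoffSum hEi N)]
          simp
  have hlim : Tendsto (fun N : ℕ => c + μ.real E + M / N) atTop (𝓝 (c + μ.real E)) := by
    simpa using tendsto_const_nhds.add (tendsto_const_div_atTop_nhds_zero_nat (M : ℝ))
  refine ge_of_tendsto hlim (eventually_atTop.2 ⟨1, fun N hN1 => ?_⟩)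
  have hNpos : (0 : ℝ) < N := by exact_mod_cast hN1
  rw [add_div' _ _ _ hNpos.ne', le_div_iff₀ hNpos]
  linarith [hN N]

lemma MeasureTheory.MeasurePreserving.integral_le_of_ae_liminf_birkhoffAverage_lt
    [IsProbabilityMeasure μ] (hT : MeasurePreserving T μ μ) (hgm : Measurable g)
    (hg : ∀ x, g x ∈ Icc 0 1) {r : ℝ}
    (hr : ∀ᵐ x ∂μ, liminf (birkhoffAverage ℝ T g · x) atTop < r) :
    ∫ y, g y ∂μ ≤ r := by
  have hA := birkhoffAverage_mem_Icc (T := T) hg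
  have hle_liminf : ∀ x s, (∀ n ≥ 1, s ≤ birkhoffAverage ℝ T g n x) →
      s ≤ liminf (birkhoffAverage ℝ T g · x) atTop := fun x s h =>
    le_liminf_of_le
      (isBoundedUnder_of_eventually_le (.of_forall fun n => (hA n x).2)).isCoboundedUnder_ge
      (eventually_atTop.2 ⟨1, h⟩)
  have hr₀ : 0 ≤ r := by
    obtain ⟨x, hx⟩ := hr.exists
    exact (hle_liminf x 0 fun n _ => (hA n x).1).trans hx.le
  set E : ℕ → Set α := fun M => ⋂ t ∈ Finset.Icc 1 M, {y | r * t ≤ birkhoffSum T g t y}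
  have hEm : ∀ M, MeasurableSet (E M) := fun M => Finset.measurableSet_biInter _ fun t _ =>
    measurableSet_le measurable_const (measurable_birkhoffSum hT.measurable hgm t)
  have hE_anti : Antitone E := fun M M' hMM' =>
    biInter_subset_biInter_left fun t ht => by simp at ht ⊢; omega
  have hE_null : μ (⋂ M, E M) = 0 := by
    refine measure_mono_null (fun y hy => ?_) (ae_iff.1 hr)
    refine not_lt.2 (hle_liminf y r fun n hn => ?_)
    rw [birkhoffAverage_real_eq_div, le_div_iff₀ (by exact_mod_cast hn)]
    exact mem_iInter₂.1 (mem_iInter.1 hy n) n (by simp [hn])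
  refine le_of_forall_pos_le_add fun η hη => ?_
  obtain ⟨M, hM⟩ : ∃ M, μ.real (E M) < η := by
    have := tendsto_measure_iInter_atTop (fun M => (hEm M).nullMeasurableSet) hE_anti
      ⟨0, measure_ne_top μ _⟩
    rw [hE_null] at this
    obtain ⟨M, hM⟩ := (this.eventually_lt_const (ENNReal.ofReal_pos.2 hη)).exists
    exact ⟨M, ENNReal.toReal_lt_of_lt_ofReal hM⟩
  have := hT.integral_le_add_measureReal_of_birkhoffSum_lt
    (.of_mem_Icc 0 1 hgm.aemeasurable (.of_forall hg)) (fun x => (hg x).2) hr₀ (hEm M)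
    fun y hy => by simpa [E, and_assoc] using hy
  linarith

theorem Ergodic.ae_integral_le_liminf_birkhoffAverage [IsProbabilityMeasure μ] (hT : Ergodic T μ)
    (hgm : Measurable g) (hg : ∀ x, g x ∈ Icc 0 1) :
    ∀ᵐ x ∂μ, ∫ y, g y ∂μ ≤ liminf (birkhoffAverage ℝ T g · x) atTop := by
  obtain ⟨ℓ, hℓ⟩ := hT.ae_eq_const_of_ae_eq_comp_ae
    (Measurable.liminf (measurable_birkhoffAverage hT.measurable hgm)).aestronglyMeasurable
    (.of_forall fun x => liminf_birkhoffAverage_apply hg x)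
  have : ∫ y, g y ∂μ ≤ ℓ := le_of_forall_gt_imp_ge_of_dense fun r hr =>
    hT.toMeasurePreserving.integral_le_of_ae_liminf_birkhoffAverage_lt hgm hg
      (hℓ.mono fun x hx => hx.trans_lt hr)
  filter_upwards [hℓ] with x hx
  exact this.trans_eq hx.symm

theorem Ergodic.ae_tendsto_birkhoffAverage [IsProbabilityMeasure μ] (hT : Ergodic T μ)
    (hgm : Measurable g) (hg : ∀ x, g x ∈ Icc 0 1) :
    ∀ᵐ x ∂μ, Tendsto (birkhoffAverage ℝ T g · x) atTop (𝓝 (∫ y, g y ∂μ)) := by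
  have hg' : ∀ x, (1 - g) x ∈ Icc 0 1 := fun x => by simpa [and_comm] using hg x
  have hgi : Integrable g μ := .of_mem_Icc 0 1 hgm.aemeasurable (.of_forall hg)
  have hbdd : ∀ {h : α → ℝ}, (∀ x, h x ∈ Icc 0 1) → ∀ x,
      IsBoundedUnder (· ≥ ·) atTop (birkhoffAverage ℝ T h · x) := fun hh x =>
    isBoundedUnder_of_eventually_ge (.of_forall fun n => (birkhoffAverage_mem_Icc hh n x).1)
  filter_upwards [hT.ae_integral_le_liminf_birkhoffAverage hgm hg,
    hT.ae_integral_le_liminf_birkhoffAverage (g := 1 - g) (measurable_one.sub hgm) hg']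
    with x hlow hup
  simp only [Pi.sub_apply, Pi.one_apply] at hup
  rw [integral_sub (integrable_const 1) hgi, integral_const, probReal_univ, one_smul] at hup
  refine tendsto_order.2 ⟨fun r hr => eventually_lt_of_lt_liminf (hr.trans_le hlow) (hbdd hg x),
    fun r hr => ?_⟩
  filter_upwards [eventually_lt_of_lt_liminf ((sub_lt_sub_left hr 1).trans_le hup)
    (hbdd hg' x), eventually_ne_atTop 0] with n hn hn₀
  rw [birkhoffAverage_sub, Pi.sub_apply,
    birkhoffAverage_of_comp_eq ℝ (f := T) (g := (1 : α → ℝ)) rfl (Nat.cast_ne_zero.2 hn₀)] at hn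
  simp only [Pi.sub_apply, Pi.one_apply] at hn
  linarith

end Measure

/-- **Lemma (Guysinsky).** For a homeomorphism `f` of a separable metric space
preserving an ergodic Borel probability measure `μ`, there is a full-measure set `P`
such that for each `x ∈ P` and all `ε, δ > 0` there is `N` such that for every
`n > N` there is an integer `k` with `n(1+ε) < k < n(1+2ε)` and `dist(x, f^k x) < δ`. -/
theorem guysinsky_return_times
    {X : Type*} [MetricSpace X] [TopologicalSpace.SeparableSpace X]
    [MeasurableSpace X] [BorelSpace X]
    (f : X ≃ₜ X) (μ : Measure X) [IsProbabilityMeasure μ] (hf : Ergodic (⇑f) μ) :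
    ∃ P : Set X, μ P = 1 ∧ ∀ x ∈ P, ∀ ε : ℝ, 0 < ε → ∀ δ : ℝ, 0 < δ →
      ∃ N : ℕ, ∀ n : ℕ, N < n → ∃ k : ℕ,
        (n : ℝ) * (1 + ε) < k ∧ (k : ℝ) < n * (1 + 2 * ε) ∧
        dist x ((⇑f)^[k] x) < δ := by
  have hB := isBasis_countableBasis X
  have hfreq : ∀ᵐ x ∂μ, ∀ U ∈ countableBasis X,
      Tendsto (birkhoffAverage ℝ f (U.indicator 1) · x) atTop (𝓝 (μ.real U)) :=
    (ae_ball_iff (countable_countableBasis X)).2 fun U hU => by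
      simpa [integral_indicator_one (hB.isOpen hU).measurableSet] using
        hf.ae_tendsto_birkhoffAverage (measurable_one.indicator (hB.isOpen hU).measurableSet)
          (indicator_one_mem_Icc U)
  have hP : μ.support ∩ {x | ∀ U ∈ countableBasis X,
      Tendsto (birkhoffAverage ℝ f (U.indicator 1) · x) atTop (𝓝 (μ.real U))} ∈ ae μ :=
    inter_mem Measure.support_mem_ae hfreq
  refine ⟨_, (measure_congr (ae_eq_univ.2 hP)).trans measure_univ, ?_⟩
  rintro x ⟨hx_supp, hx_freq⟩ ε hε δ hδ
  obtain ⟨U, hU, hxU, hUδ⟩ :=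
    hB.exists_subset_of_mem_open (Metric.mem_ball_self hδ) Metric.isOpen_ball
  have hμU : 0 < μ.real U := ENNReal.toReal_pos
    ((Measure.mem_support_iff_forall x).1 hx_supp U ((hB.isOpen hU).mem_nhds hxU)).ne'
    (measure_ne_top μ U)
  obtain ⟨N, hN⟩ := eventually_atTop.1 <| eventually_exists_iterate_mem_of_tendsto_birkhoffAverage
    (hx_freq U hU) hμU (by linarith : (0 : ℝ) < 1 + ε) (by linarith : 1 + ε < 1 + 2 * ε)
  refine ⟨N, fun n hn => ?_⟩
  obtain ⟨k, hk₁, hk₂, hkU⟩ := hN n hn.le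
  exact ⟨k, hk₁, hk₂, by simpa [dist_comm] using hUδ hkU⟩
end
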